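/- arXiv:1410.7306 — 2 statements merged into one kernel-verified Lean document; each statement's English description precedes it below -/
import Mathlib

section
/- Let P ⊂ l∞^n be a convex polyhedron with nonempty interior. Then P is injective if and only if every tangent cone T_pP (p ∈ P) that is minimal with respect to inclusion among all tangent cones of P is injective. -/
/-!
A closed subset of `l∞ⁿ` is injective iff it is finitely hyperconvex. Indeed `l∞ⁿ` is finitely
hyperconvex coordinatewise and `1`-Lipschitz retractions preserve this; conversely compactness of
balls gives hyperconvexity for arbitrary families, and then Zorn's lemma extends the identity of
the set to a `1`-Lipschitz retraction of `l∞ⁿ`.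

Near `p`, a polyhedron `P` coincides with its tangent cone `T_p P`, which is invariant under the
homotheties centred at `p`; rescaling a finite family of balls into that neighbourhood transfers
finite hyperconvexity from `P` to `T_p P`. Conversely, if every `T_x P` is finitely hyperconvex,
minimise `max_i (d(y, x_i) - ρ_i)` over `P`: at a minimiser `y₀` with positive value, adding a
small ball around `y₀` to the family and solving in `T_{y₀} P` yields a better point of `P`.
Finally, if `T_q P ⊆ T_x P` then `T_x P` is the tangent cone of `T_q P` at `x`, so it suffices
that the minimal tangent cones be injective.
-/

open Set Metric

/-- A metric space `X` is *injective* if for all metric spaces `A`, `B`, every isometric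
embedding `i : A → B` and every `1`-Lipschitz map `f : A → X`, there is a `1`-Lipschitz
map `g : B → X` with `g ∘ i = f`. -/
def IsInjectiveMetricSpace (X : Type) [MetricSpace X] : Prop :=
  ∀ (A B : Type) [MetricSpace A] [MetricSpace B], ∀ (i : A → B) (f : A → X),
    Isometry i → LipschitzWith 1 f →
      ∃ g : B → X, LipschitzWith 1 g ∧ ∀ a, g (i a) = f a

/-- A subset of `l∞ⁿ = (Fin n → ℝ)` (whose product metric is the sup-metric) is injective
if it is an injective metric space with the induced metric. -/
def IsInjectiveSubset {n : ℕ} (S : Set (Fin n → ℝ)) : Prop :=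
  IsInjectiveMetricSpace S

/-- A convex polyhedron in `ℝⁿ` is a finite intersection of closed half-spaces. -/
def IsConvexPolyhedron {n : ℕ} (P : Set (Fin n → ℝ)) : Prop :=
  ∃ (m : ℕ) (ν : Fin m → (Fin n → ℝ)) (c : Fin m → ℝ),
    (∀ i, ν i ≠ 0) ∧ P = ⋂ i, {x | c i ≤ ∑ j, ν i j * x j}

/-- The tangent cone `T_p P = ⋃_{m ∈ ℕ} (p + m (P - p))`. -/
def tangentCone {n : ℕ} (P : Set (Fin n → ℝ)) (p : Fin n → ℝ) : Set (Fin n → ℝ) :=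
  ⋃ m : ℕ, (fun x => p + (m : ℝ) • (x - p)) '' P

open Filter Topology

section Hyperconvex

variable {E : Type} [MetricSpace E]

def IsFinitelyHyperconvex (S : Set E) : Prop :=
  ∀ (α : Type) [Finite α] (x : α → E) (ρ : α → ℝ), (∀ i, x i ∈ S) →
    (∀ i j, dist (x i) (x j) ≤ ρ i + ρ j) → ∃ y ∈ S, ∀ i, dist y (x i) ≤ ρ i

def IsHyperconvex (S : Set E) : Prop :=
  ∀ (α : Type) (x : α → E) (ρ : α → ℝ), (∀ i, x i ∈ S) →
    (∀ i j, dist (x i) (x j) ≤ ρ i + ρ j) → ∃ y ∈ S, ∀ i, dist y (x i) ≤ ρ i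

def IsLipschitzRetract (S : Set E) : Prop :=
  ∃ r : E → E, LipschitzWith 1 r ∧ (∀ x, r x ∈ S) ∧ ∀ x ∈ S, r x = x

theorem IsFinitelyHyperconvex.isHyperconvex [ProperSpace E] {S : Set E}
    (hS : IsFinitelyHyperconvex S) (hcl : IsClosed S) : IsHyperconvex S := by
  classical
  intro α x ρ hx hρ
  rcases isEmpty_or_nonempty α with hα | ⟨⟨i₀⟩⟩
  · obtain ⟨y, hy, -⟩ := hS α x ρ hx hρ
    exact ⟨y, hy, isEmptyElim⟩
  have hK : IsCompact (S ∩ closedBall (x i₀) (ρ i₀)) :=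
    (isCompact_closedBall _ _).of_isClosed_subset (hcl.inter isClosed_closedBall)
      inter_subset_right
  obtain ⟨y, ⟨hyS, -⟩, hy⟩ := hK.inter_iInter_nonempty (fun i => closedBall (x i) (ρ i))
    (fun _ => isClosed_closedBall) fun F => by
      obtain ⟨y, hyS, hy⟩ := hS (insert i₀ F : Finset α) (fun i => x i) (fun i => ρ i)
        (fun i => hx i) fun i j => hρ i j
      refine ⟨y, ⟨hyS, hy ⟨i₀, Finset.mem_insert_self _ _⟩⟩, mem_iInter₂.2 fun i hi => ?_⟩
      exact hy ⟨i, Finset.mem_insert_of_mem hi⟩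
  exact ⟨y, hyS, fun i => mem_iInter.1 hy i⟩

/-- `Γ ⊆ E × E` is the graph of a `1`-Lipschitz partial map into `S`. -/
def IsNonexpandingGraph (S : Set E) (Γ : Set (E × E)) : Prop :=
  (∀ p ∈ Γ, p.2 ∈ S) ∧ ∀ p ∈ Γ, ∀ q ∈ Γ, dist p.2 q.2 ≤ dist p.1 q.1

theorem IsHyperconvex.exists_isNonexpandingGraph_insert {S : Set E} (hS : IsHyperconvex S)
    {Γ : Set (E × E)} (hΓ : IsNonexpandingGraph S Γ) (b : E) :
    ∃ y, IsNonexpandingGraph S (insert (b, y) Γ) := by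
  obtain ⟨y, hyS, hy⟩ := hS Γ (fun p => p.1.2) (fun p => dist b p.1.1) (fun p => hΓ.1 _ p.2)
    fun p q => (hΓ.2 _ p.2 _ q.2).trans (dist_triangle_left _ _ _)
  refine ⟨y, forall_mem_insert.2 ⟨hyS, hΓ.1⟩, forall_mem_insert.2 ⟨?_, fun p hp => ?_⟩⟩
  · exact forall_mem_insert.2 ⟨by simp, fun q hq => hy ⟨q, hq⟩⟩
  · refine forall_mem_insert.2 ⟨?_, hΓ.2 p hp⟩
    simpa only [dist_comm] using hy ⟨p, hp⟩

theorem isNonexpandingGraph_sUnion {S : Set E} {c : Set (Set (E × E))}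
    (hc : ∀ Γ ∈ c, IsNonexpandingGraph S Γ) (hchain : IsChain (· ⊆ ·) c) :
    IsNonexpandingGraph S (⋃₀ c) := by
  refine ⟨fun p ⟨Γ, hΓ, hp⟩ => (hc Γ hΓ).1 p hp, ?_⟩
  rintro p ⟨Γ, hΓ, hp⟩ q ⟨Γ', hΓ', hq⟩
  rcases hchain.total hΓ hΓ' with h | h
  exacts [(hc Γ' hΓ').2 p (h hp) q hq, (hc Γ hΓ).2 p hp q (h hq)]

/-- Aronszajn–Panitchpakdi: by Zorn's lemma, the identity of `S` extends one point at a time. -/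
theorem IsHyperconvex.isLipschitzRetract {S : Set E} (hS : IsHyperconvex S) :
    IsLipschitzRetract S := by
  have hdiag : IsNonexpandingGraph S ((fun z => (z, z)) '' S) :=
    ⟨by rintro _ ⟨z, hz, rfl⟩; exact hz, by rintro _ ⟨z, -, rfl⟩ _ ⟨w, -, rfl⟩; rfl⟩
  obtain ⟨Γ, hdiagΓ, hΓ, hmax⟩ := zorn_subset_nonempty {Γ | IsNonexpandingGraph S Γ}
    (fun c hc hchain _ => ⟨⋃₀ c, isNonexpandingGraph_sUnion hc hchain,
      fun _ => subset_sUnion_of_mem⟩) _ hdiag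
  have htotal : ∀ b, ∃ y, (b, y) ∈ Γ := fun b => by
    obtain ⟨y, hy⟩ := hS.exists_isNonexpandingGraph_insert hΓ b
    exact ⟨y, hmax hy (subset_insert _ _) (mem_insert _ _)⟩
  choose r hr using htotal
  refine ⟨r, LipschitzWith.of_dist_le_mul fun x y => ?_, fun x => hΓ.1 _ (hr x),
    fun x hx => dist_le_zero.1 ?_⟩
  · simpa using hΓ.2 _ (hr x) _ (hr y)
  · simpa using hΓ.2 _ (hr x) _ (hdiagΓ (mem_image_of_mem _ hx))

theorem IsLipschitzRetract.isFinitelyHyperconvex (hE : IsFinitelyHyperconvex (univ : Set E))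
    {S : Set E} (hS : IsLipschitzRetract S) : IsFinitelyHyperconvex S := by
  obtain ⟨r, hr, hrS, hrid⟩ := hS
  intro α _ x ρ hx hρ
  obtain ⟨y, -, hy⟩ := hE α x ρ (fun _ => mem_univ _) hρ
  refine ⟨r y, hrS y, fun i => ?_⟩
  simpa [hrid _ (hx i)] using (hr.dist_le_mul y (x i)).trans (by simpa using hy i)

theorem IsFinitelyHyperconvex.of_forall_eventually [ProperSpace E] {S : Set E}
    (hcl : IsClosed S) (hne : S.Nonempty)
    (hloc : ∀ p ∈ S, ∃ C, S ⊆ C ∧ IsFinitelyHyperconvex C ∧ ∀ᶠ y in 𝓝 p, y ∈ C → y ∈ S) :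
    IsFinitelyHyperconvex S := by
  intro α _ x ρ hx hρ
  rcases isEmpty_or_nonempty α with hα | hα
  · exact ⟨hne.some, hne.some_mem, isEmptyElim⟩
  obtain ⟨i₀⟩ := id hα
  have := Fintype.ofFinite α
  set f : E → ℝ := fun y => Finset.univ.sup' Finset.univ_nonempty fun i => dist y (x i) - ρ i
  have hf_le : ∀ y t, f y ≤ t ↔ ∀ i, dist y (x i) - ρ i ≤ t := by
    simp [f, Finset.sup'_le_iff]
  have hf_ge : ∀ y i, dist y (x i) - ρ i ≤ f y := fun y => (hf_le y _).1 le_rfl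
  have hf_cont : Continuous f := Continuous.finset_sup'_apply _ fun i _ => by fun_prop
  obtain ⟨y₀, hy₀, hmin⟩ := hf_cont.continuousOn.exists_isMinOn' hcl (hx i₀) <|
    (((tendsto_dist_right_cocompact_atTop (x i₀)).eventually_ge_atTop
      (f (x i₀) + ρ i₀)).filter_mono inf_le_left).mono fun y hy => by linarith [hf_ge y i₀]
  -- At a minimiser `y₀` with `f y₀ > 0`, a ball of radius `ε` around `y₀` joins the family.
  refine ⟨y₀, hy₀, fun i => ?_⟩
  suffices f y₀ ≤ 0 by linarith [hf_ge y₀ i]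
  by_contra! hpos
  obtain ⟨C, hSC, hC, hCS⟩ := hloc y₀ hy₀
  obtain ⟨ε₀, hε₀, hball⟩ := Metric.eventually_nhds_iff.1 hCS
  set ε := min (f y₀) (ε₀ / 2)
  have hε : 0 < ε := lt_min hpos (half_pos hε₀)
  obtain ⟨y, hyC, hy⟩ := hC (Option α) (fun o => o.elim y₀ x)
    (fun o => o.elim ε fun i => ρ i + f y₀ - ε) (Option.rec (hSC hy₀) fun i => hSC (hx i)) <| by
      have := min_le_left (f y₀) (ε₀ / 2)
      rintro (_ | i) (_ | j) <;> simp only [Option.elim, dist_self]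
      · linarith
      · linarith [hf_ge y₀ j]
      · linarith [hf_ge y₀ i, dist_comm (x i) y₀]
      · linarith [hρ i j]
  have hyy₀ : dist y y₀ ≤ ε := hy none
  have hyS : y ∈ S := hball (by linarith [min_le_right (f y₀) (ε₀ / 2)]) hyC
  have hyx : ∀ i, dist y (x i) ≤ ρ i + f y₀ - ε := fun i => hy (some i)
  have : f y ≤ f y₀ - ε := (hf_le _ _).2 fun i => by linarith [hyx i]
  linarith [isMinOn_iff.1 hmin y hyS]

end Hyperconvex

section Injective

variable {E : Type} [MetricSpace E]

theorem IsInjectiveMetricSpace.isLipschitzRetract {S : Set E}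
    (hS : IsInjectiveMetricSpace S) : IsLipschitzRetract S := by
  obtain ⟨g, hg, hgS⟩ := hS S E Subtype.val id isometry_subtype_coe LipschitzWith.id
  refine ⟨Subtype.val ∘ g, by simpa using (LipschitzWith.subtype_val S).comp hg,
    fun x => (g x).2, fun x hx => congrArg Subtype.val (hgS ⟨x, hx⟩)⟩

theorem IsLipschitzRetract.isInjectiveMetricSpace (hE : IsInjectiveMetricSpace E) {S : Set E}
    (hS : IsLipschitzRetract S) : IsInjectiveMetricSpace S := by
  obtain ⟨r, hr, hrS, hrid⟩ := hS
  intro A B _ _ i f hi hf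
  obtain ⟨G, hG, hGf⟩ := hE A B i (Subtype.val ∘ f) hi
    (by simpa using (LipschitzWith.subtype_val S).comp hf)
  refine ⟨fun b => ⟨r (G b), hrS _⟩, by simpa using (hr.comp hG).subtype_mk fun b => hrS (G b),
    fun a => Subtype.ext ((congrArg r (hGf a)).trans (hrid _ (f a).2))⟩

variable {ι : Type} [Fintype ι]

theorem isInjectiveMetricSpace_pi : IsInjectiveMetricSpace (ι → ℝ) := by
  intro A B _ _ i f hi hf
  have hF : LipschitzOnWith 1 (Function.extend i f 0) (range i) := by
    refine LipschitzOnWith.of_dist_le_mul ?_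
    rintro _ ⟨a, rfl⟩ _ ⟨a', rfl⟩
    simpa [hi.injective.extend_apply, hi.dist_eq] using hf.dist_le_mul a a'
  obtain ⟨g, hg, hgF⟩ := hF.extend_pi
  exact ⟨g, hg, fun a =>
    (hgF (mem_range_self a)).symm.trans (hi.injective.extend_apply f 0 a)⟩

theorem isFinitelyHyperconvex_univ_pi : IsFinitelyHyperconvex (univ : Set (ι → ℝ)) := by
  intro α _ x ρ _ hρ
  rcases isEmpty_or_nonempty α with hα | hα
  · exact ⟨0, mem_univ _, isEmptyElim⟩
  -- Coordinatewise, the intervals `[x i k - ρ i, x i k + ρ i]` pairwise meet, so the largest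
  -- left endpoint lies in all of them.
  refine ⟨fun k => ⨆ i, x i k - ρ i, mem_univ _, fun i => ?_⟩
  have hρi : 0 ≤ ρ i := by linarith [dist_self (x i) ▸ hρ i i]
  refine (dist_pi_le_iff hρi).2 fun k => ?_
  obtain ⟨j, hj⟩ := exists_eq_ciSup_of_finite (f := fun i => x i k - ρ i)
  have hij := le_ciSup (Finite.bddAbove_range fun i => x i k - ρ i) i
  have hji := abs_le.1 ((dist_le_pi_dist (x j) (x i) k).trans (hρ j i))
  rw [Real.dist_eq, ← hj, abs_le]
  constructor <;> linarith

theorem isInjectiveMetricSpace_iff_isFinitelyHyperconvex {S : Set (ι → ℝ)} (hS : IsClosed S) :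
    IsInjectiveMetricSpace S ↔ IsFinitelyHyperconvex S :=
  ⟨fun h => h.isLipschitzRetract.isFinitelyHyperconvex isFinitelyHyperconvex_univ_pi,
    fun h => (h.isHyperconvex hS).isLipschitzRetract.isInjectiveMetricSpace
      isInjectiveMetricSpace_pi⟩

end Injective

section Cone

variable {E : Type} [NormedAddCommGroup E] [NormedSpace ℝ E]

theorem dist_add_smul_sub_add_smul_sub (p y z : E) (t : ℝ) :
    dist (p + t • (y - p)) (p + t • (z - p)) = |t| * dist y z := by
  rw [dist_eq_norm, dist_eq_norm, ← Real.norm_eq_abs, ← norm_smul]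
  congr 1
  module

/-- Rescaling a finite family towards `p` moves it into the neighbourhood where `C` and `S`
agree. -/
theorem IsFinitelyHyperconvex.of_eventually_mem_of_homothety_mem {S C : Set E} {p : E}
    (hS : IsFinitelyHyperconvex S) (hSC : S ⊆ C)
    (hC : ∀ y ∈ C, ∀ t : ℝ, 0 < t → p + t • (y - p) ∈ C)
    (hloc : ∀ᶠ y in 𝓝 p, y ∈ C → y ∈ S) : IsFinitelyHyperconvex C := by
  intro α _ x ρ hx hρ
  obtain ⟨t, ht, htS⟩ : ∃ t : ℝ, 0 < t ∧ ∀ i, p + t • (x i - p) ∈ S := by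
    have hpos : ∀ᶠ t in 𝓝[>] (0 : ℝ), 0 < t := self_mem_nhdsWithin
    refine (hpos.and (eventually_all.2 fun i => ?_)).exists
    have hlim : Tendsto (fun t : ℝ => p + t • (x i - p)) (𝓝 0) (𝓝 p) :=
      Continuous.tendsto' (by fun_prop) _ _ (by simp)
    filter_upwards [(hlim.mono_left nhdsWithin_le_nhds).eventually hloc, hpos] with s hs hs0
    exact hs (hC _ (hx i) s hs0)
  obtain ⟨y, hyS, hy⟩ := hS α (fun i => p + t • (x i - p)) (fun i => t * ρ i) htS fun i j => by
    rw [dist_add_smul_sub_add_smul_sub, abs_of_pos ht, ← mul_add]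
    exact mul_le_mul_of_nonneg_left (hρ i j) ht.le
  refine ⟨p + t⁻¹ • (y - p), hC y (hSC hyS) _ (inv_pos.2 ht), fun i => ?_⟩
  have hxi : x i = p + t⁻¹ • ((p + t • (x i - p)) - p) := by
    rw [add_sub_cancel_left, smul_smul, inv_mul_cancel₀ ht.ne', one_smul, add_sub_cancel]
  rw [hxi, dist_add_smul_sub_add_smul_sub, abs_of_pos (inv_pos.2 ht)]
  calc t⁻¹ * dist y (p + t • (x i - p)) ≤ t⁻¹ * (t * ρ i) := by gcongr; exact hy i
    _ = ρ i := by field_simp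

end Cone

section Polyhedron

variable {n : ℕ} {ι : Type}

def polyhedron (ν : ι → Fin n → ℝ) (c : ι → ℝ) : Set (Fin n → ℝ) :=
  ⋂ i, {x | c i ≤ ν i ⬝ᵥ x}

def activeCone (ν : ι → Fin n → ℝ) (c : ι → ℝ) (p : Fin n → ℝ) : Set (Fin n → ℝ) :=
  polyhedron (fun i : {i // ν i ⬝ᵥ p = c i} => ν i) (fun i => c i)

variable {ν : ι → Fin n → ℝ} {c : ι → ℝ} {P : Set (Fin n → ℝ)} {p q x : Fin n → ℝ}

theorem mem_polyhedron : x ∈ polyhedron ν c ↔ ∀ i, c i ≤ ν i ⬝ᵥ x := mem_iInter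

theorem mem_activeCone : x ∈ activeCone ν c p ↔ ∀ i, ν i ⬝ᵥ p = c i → c i ≤ ν i ⬝ᵥ x := by
  simp [activeCone, mem_polyhedron]

theorem isClosed_polyhedron (ν : ι → Fin n → ℝ) (c : ι → ℝ) : IsClosed (polyhedron ν c) :=
  isClosed_iInter fun _ =>
    isClosed_le continuous_const (continuous_const.dotProduct continuous_id)

theorem polyhedron_subset_activeCone : polyhedron ν c ⊆ activeCone ν c p :=
  fun _ hx => mem_activeCone.2 fun i _ => mem_polyhedron.1 hx i

theorem add_smul_sub_mem_activeCone {y : Fin n → ℝ} (hy : y ∈ activeCone ν c p) {t : ℝ}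
    (ht : 0 ≤ t) : p + t • (y - p) ∈ activeCone ν c p := by
  refine mem_activeCone.2 fun i hi => ?_
  rw [dotProduct_add, dotProduct_smul, dotProduct_sub, hi, smul_eq_mul]
  nlinarith [mem_activeCone.1 hy i hi]

theorem eventually_mem_polyhedron_of_mem_activeCone [Finite ι] (hp : p ∈ polyhedron ν c) :
    ∀ᶠ y in 𝓝 p, y ∈ activeCone ν c p → y ∈ polyhedron ν c := by
  have hinactive : ∀ᶠ y in 𝓝 p, ∀ i, ν i ⬝ᵥ p ≠ c i → c i < ν i ⬝ᵥ y := by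
    refine eventually_all.2 fun i => ?_
    by_cases hi : ν i ⬝ᵥ p = c i
    · exact Eventually.of_forall fun _ h => absurd hi h
    · have hlt : c i < ν i ⬝ᵥ p := (mem_polyhedron.1 hp i).lt_of_ne' hi
      filter_upwards [((continuous_const.dotProduct continuous_id).tendsto p).eventually
        (lt_mem_nhds hlt)] with y hy _ using hy
  filter_upwards [hinactive] with y hy hyA
  refine mem_polyhedron.2 fun i => ?_
  by_cases hi : ν i ⬝ᵥ p = c i
  exacts [mem_activeCone.1 hyA i hi, (hy i hi).le]

theorem mem_tangentCone_iff :
    x ∈ tangentCone P p ↔ ∃ m : ℕ, ∃ w ∈ P, p + (m : ℝ) • (w - p) = x := by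
  simp [tangentCone]

theorem subset_tangentCone : P ⊆ tangentCone P p :=
  fun w hw => mem_tangentCone_iff.2 ⟨1, w, hw, by simp⟩

theorem tangentCone_mono {Q : Set (Fin n → ℝ)} (h : P ⊆ Q) :
    tangentCone P p ⊆ tangentCone Q p :=
  iUnion_mono fun _ => image_mono h

theorem tangentCone_tangentCone_self_subset :
    tangentCone (tangentCone P p) p ⊆ tangentCone P p := by
  intro z hz
  obtain ⟨m, y, hy, rfl⟩ := mem_tangentCone_iff.1 hz
  obtain ⟨m', w, hw, rfl⟩ := mem_tangentCone_iff.1 hy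
  exact mem_tangentCone_iff.2 ⟨m * m', w, hw, by push_cast; module⟩

theorem tangentCone_tangentCone_of_subset (h : tangentCone P q ⊆ tangentCone P x) :
    tangentCone (tangentCone P q) x = tangentCone P x :=
  (tangentCone_mono h).trans tangentCone_tangentCone_self_subset |>.antisymm
    (tangentCone_mono subset_tangentCone)

theorem tangentCone_polyhedron [Finite ι] (hp : p ∈ polyhedron ν c) :
    tangentCone (polyhedron ν c) p = activeCone ν c p := by
  refine Subset.antisymm (fun z hz => ?_) fun z hz => ?_
  · obtain ⟨m, w, hw, rfl⟩ := mem_tangentCone_iff.1 hz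
    exact add_smul_sub_mem_activeCone (polyhedron_subset_activeCone hw) m.cast_nonneg
  · -- The points `p + m⁻¹ (z - p)` of the active cone tend to `p`, so eventually lie in `P`.
    have hlim : Tendsto (fun m : ℕ => p + (m : ℝ)⁻¹ • (z - p)) atTop (𝓝 p) := by
      simpa using tendsto_const_nhds.add
        ((tendsto_inv_atTop_nhds_zero_nat (𝕜 := ℝ)).smul_const (z - p))
    obtain ⟨m, hm, hmP⟩ := ((eventually_ge_atTop 1).and (hlim.eventually
      (eventually_mem_polyhedron_of_mem_activeCone hp))).exists
    refine mem_tangentCone_iff.2 ⟨m, _, hmP (add_smul_sub_mem_activeCone hz (by positivity)), ?_⟩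
    rw [add_sub_cancel_left, smul_smul, mul_inv_cancel₀ (by positivity), one_smul,
      add_sub_cancel]

theorem isClosed_tangentCone_polyhedron [Finite ι] (hp : p ∈ polyhedron ν c) :
    IsClosed (tangentCone (polyhedron ν c) p) :=
  tangentCone_polyhedron hp ▸ isClosed_polyhedron _ _

theorem exists_minimal_tangentCone [Finite ι] (hx : x ∈ polyhedron ν c) :
    ∃ q ∈ polyhedron ν c, tangentCone (polyhedron ν c) q ⊆ tangentCone (polyhedron ν c) x ∧
      ∀ r ∈ polyhedron ν c, tangentCone (polyhedron ν c) r ⊆ tangentCone (polyhedron ν c) q →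
        tangentCone (polyhedron ν c) r = tangentCone (polyhedron ν c) q := by
  have hfin : (tangentCone (polyhedron ν c) '' polyhedron ν c).Finite := by
    refine (finite_range fun A : Set ι => polyhedron (fun i : A => ν i) (fun i => c i)).subset ?_
    rintro _ ⟨q, hq, rfl⟩
    exact ⟨{i | ν i ⬝ᵥ q = c i}, (tangentCone_polyhedron hq).symm⟩
  obtain ⟨_, hle, ⟨q, hq, rfl⟩, hmin⟩ := hfin.exists_le_minimal (mem_image_of_mem _ hx)
  exact ⟨q, hq, hle, fun r hr hrq => le_antisymm hrq (hmin ⟨r, hr, rfl⟩ hrq)⟩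

theorem IsFinitelyHyperconvex.tangentCone_polyhedron [Finite ι]
    (hP : IsFinitelyHyperconvex (polyhedron ν c)) (hp : p ∈ polyhedron ν c) :
    IsFinitelyHyperconvex (tangentCone (polyhedron ν c) p) := by
  rw [_root_.tangentCone_polyhedron hp]
  exact hP.of_eventually_mem_of_homothety_mem polyhedron_subset_activeCone
    (fun y hy t ht => add_smul_sub_mem_activeCone hy ht.le)
    (eventually_mem_polyhedron_of_mem_activeCone hp)

theorem isFinitelyHyperconvex_polyhedron_of_tangentCone [Finite ι]
    (hne : (polyhedron ν c).Nonempty)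
    (h : ∀ x ∈ polyhedron ν c, IsFinitelyHyperconvex (tangentCone (polyhedron ν c) x)) :
    IsFinitelyHyperconvex (polyhedron ν c) :=
  .of_forall_eventually (isClosed_polyhedron ν c) hne fun x hx =>
    ⟨_, subset_tangentCone, h x hx, tangentCone_polyhedron hx ▸
      eventually_mem_polyhedron_of_mem_activeCone hx⟩

end Polyhedron

/-- A convex polyhedron `P ⊆ l∞ⁿ` with nonempty interior is injective iff every tangent
cone of `P` that is minimal with respect to inclusion among all tangent cones of `P`
is injective. -/
theorem injective_iff_minimal_tangentCones {n : ℕ} (P : Set (Fin n → ℝ))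
    (hP : IsConvexPolyhedron P) (hint : (interior P).Nonempty) :
    IsInjectiveSubset P ↔
      ∀ p ∈ P, (∀ q ∈ P, tangentCone P q ⊆ tangentCone P p →
          tangentCone P q = tangentCone P p) →
        IsInjectiveSubset (tangentCone P p) := by
  obtain ⟨m, ν, c, -, hPeq⟩ := hP
  obtain rfl : P = polyhedron ν c := hPeq
  have hP_iff : IsInjectiveSubset (polyhedron ν c) ↔ IsFinitelyHyperconvex (polyhedron ν c) :=
    isInjectiveMetricSpace_iff_isFinitelyHyperconvex (isClosed_polyhedron ν c)
  have hT_iff : ∀ p ∈ polyhedron ν c, IsInjectiveSubset (tangentCone (polyhedron ν c) p) ↔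
      IsFinitelyHyperconvex (tangentCone (polyhedron ν c) p) := fun p hp =>
    isInjectiveMetricSpace_iff_isFinitelyHyperconvex (isClosed_tangentCone_polyhedron hp)
  rw [hP_iff]
  constructor
  · exact fun hP p hp _ => (hT_iff p hp).2 (hP.tangentCone_polyhedron hp)
  · intro hmin
    refine isFinitelyHyperconvex_polyhedron_of_tangentCone (hint.mono interior_subset)
      fun x hx => ?_
    obtain ⟨q, hq, hqx, hq_min⟩ := exists_minimal_tangentCone hx
    have hTq := (hT_iff q hq).1 (hmin q hq hq_min)
    -- `T_x P` is the tangent cone at `x` of the minimal cone `T_q P`, itself a polyhedron.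
    rw [← tangentCone_tangentCone_of_subset hqx]
    rw [tangentCone_polyhedron hq] at hTq ⊢
    exact hTq.tangentCone_polyhedron (polyhedron_subset_activeCone hx)
end

section
/- If P' and P'' are nonempty disjoint convex polyhedra in ℝ^n, then d(P',P'') := inf{ ‖a − b‖∞ : a ∈ P', b ∈ P'' } > 0. -/
open Set Metric

/-- A finite intersection of (possibly degenerate) closed half-spaces. -/
def PolyF {k : ℕ} (S : Set (Fin k → ℝ)) : Prop :=
  ∃ A : Finset ((Fin k → ℝ) × ℝ), S = {x | ∀ p ∈ A, p.2 ≤ ∑ j, p.1 j * x j}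

lemma PolyF.isClosed {k : ℕ} {S : Set (Fin k → ℝ)} (h : PolyF S) : IsClosed S := by
  obtain ⟨A, rfl⟩ := h
  have : {x : Fin k → ℝ | ∀ p ∈ A, p.2 ≤ ∑ j, p.1 j * x j}
      = ⋂ p ∈ A, {x | p.2 ≤ ∑ j, p.1 j * x j} := by
    ext x; simp
  rw [this]
  refine isClosed_biInter fun p _ => isClosed_le continuous_const ?_
  exact continuous_finset_sum _ fun j _ => continuous_const.mul (continuous_apply j)

/-- Fourier–Motzkin elimination: projecting out the last coordinate. -/
lemma PolyF.snocProj {k : ℕ} {S : Set (Fin (k + 1) → ℝ)} (h : PolyF S) :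
    PolyF {x : Fin k → ℝ | ∃ t : ℝ, Fin.snoc x t ∈ S} := by
  obtain ⟨A, rfl⟩ := h
  set α : (Fin (k + 1) → ℝ) × ℝ → ℝ := fun p => p.1 (Fin.last k) with hα
  set L : (Fin (k + 1) → ℝ) × ℝ → (Fin k → ℝ) → ℝ :=
    fun p x => ∑ j, p.1 j.castSucc * x j with hL
  have key : ∀ (p : (Fin (k + 1) → ℝ) × ℝ) (x : Fin k → ℝ) (t : ℝ),
      (∑ j, p.1 j * (Fin.snoc x t : Fin (k+1) → ℝ) j) = L p x + α p * t := by
    intro p x t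
    rw [Fin.sum_univ_castSucc]
    simp [hL, hα]
  refine ⟨(A.filter (fun p => α p = 0)).image (fun p => ((fun j => p.1 j.castSucc), p.2))
      ∪ ((A ×ˢ A).filter (fun pq => 0 < α pq.1 ∧ α pq.2 < 0)).image
        (fun pq => ((fun j => (-α pq.2) * pq.1.1 j.castSucc + α pq.1 * pq.2.1 j.castSucc),
          (-α pq.2) * pq.1.2 + α pq.1 * pq.2.2)), ?_⟩
  ext x
  simp only [Set.mem_setOf_eq, Finset.mem_union, Finset.mem_image, Finset.mem_filter,
    Finset.mem_product]
  constructor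
  · rintro ⟨t, ht⟩ p' hp'
    rcases hp' with ⟨p, ⟨hpA, hp0⟩, rfl⟩ | ⟨⟨p, q⟩, ⟨⟨hpA, hqA⟩, hp, hq⟩, rfl⟩
    · have := ht p hpA
      rw [key] at this
      simpa [hp0, hL] using this
    · have h1 := ht p hpA
      have h2 := ht q hqA
      rw [key] at h1 h2
      have e : (∑ j, ((-α q) * p.1 j.castSucc + α p * q.1 j.castSucc) * x j)
          = (-α q) * L p x + α p * L q x := by
        simp only [hL, Finset.mul_sum]
        rw [← Finset.sum_add_distrib]
        exact Finset.sum_congr rfl fun j _ => by ring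
      rw [e]
      dsimp only
      nlinarith [mul_le_mul_of_nonneg_left h1 (le_of_lt (neg_pos.mpr hq)),
        mul_le_mul_of_nonneg_left h2 (le_of_lt hp)]
  · intro hx
    -- lower and upper bounds for t
    set LB : Finset ℝ := (A.filter (fun p => 0 < α p)).image (fun p => (p.2 - L p x) / α p)
      with hLB
    set UB : Finset ℝ := (A.filter (fun p => α p < 0)).image (fun p => (p.2 - L p x) / α p)
      with hUB
    have cross : ∀ p ∈ A, ∀ q ∈ A, 0 < α p → α q < 0 →
        (p.2 - L p x) / α p ≤ (q.2 - L q x) / α q := by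
      intro p hpA q hqA hp hq
      have hcross := hx _ (Or.inr ⟨(p, q), ⟨⟨hpA, hqA⟩, hp, hq⟩, rfl⟩)
      have e : (∑ j, ((-α q) * p.1 j.castSucc + α p * q.1 j.castSucc) * x j)
          = (-α q) * L p x + α p * L q x := by
        simp only [hL, Finset.mul_sum]
        rw [← Finset.sum_add_distrib]
        exact Finset.sum_congr rfl fun j _ => by ring
      rw [e] at hcross
      dsimp only at hcross
      have h1 : (p.2 - L p x) / α p * α p = p.2 - L p x := div_mul_cancel₀ _ hp.ne'
      have h2 : (q.2 - L q x) / α q * α q = q.2 - L q x := div_mul_cancel₀ _ hq.ne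
      nlinarith [mul_pos hp (neg_pos.mpr hq)]
    classical
    set t : ℝ := if hLne : LB.Nonempty then LB.max' hLne
      else if hUne : UB.Nonempty then UB.min' hUne else 0 with hdef
    have hlow : ∀ l ∈ LB, l ≤ t := by
      intro l hl
      rw [hdef, dif_pos ⟨l, hl⟩]
      exact LB.le_max' l hl
    have hup : ∀ u ∈ UB, t ≤ u := by
      intro u hu
      by_cases hLne : LB.Nonempty
      · rw [hdef, dif_pos hLne]
        obtain ⟨p, hp, hpe⟩ := Finset.mem_image.mp (LB.max'_mem hLne)
        obtain ⟨q, hq, hqe⟩ := Finset.mem_image.mp hu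
        rw [← hpe, ← hqe]
        exact cross p (Finset.mem_filter.mp hp).1 q (Finset.mem_filter.mp hq).1
          (Finset.mem_filter.mp hp).2 (Finset.mem_filter.mp hq).2
      · rw [hdef, dif_neg hLne, dif_pos ⟨u, hu⟩]
        exact UB.min'_le u hu
    refine ⟨t, fun p hpA => ?_⟩
    rw [key]
    rcases lt_trichotomy (α p) 0 with hneg | hzero | hpos
    · have hu : (p.2 - L p x) / α p ∈ UB :=
        hUB ▸ Finset.mem_image.mpr ⟨p, Finset.mem_filter.mpr ⟨hpA, hneg⟩, rfl⟩
      have := hup _ hu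
      have h2 : (p.2 - L p x) / α p * α p = p.2 - L p x := div_mul_cancel₀ _ hneg.ne
      nlinarith
    · have := hx _ (Or.inl ⟨p, ⟨hpA, hzero⟩, rfl⟩)
      simp only [hL] at this ⊢
      rw [hzero]
      linarith
    · have hl : (p.2 - L p x) / α p ∈ LB :=
        hLB ▸ Finset.mem_image.mpr ⟨p, Finset.mem_filter.mpr ⟨hpA, hpos⟩, rfl⟩
      have := hlow _ hl
      have h2 : (p.2 - L p x) / α p * α p = p.2 - L p x := div_mul_cancel₀ _ hpos.ne'
      nlinarith

lemma fin_append_zero {n : ℕ} (x : Fin n → ℝ) (y : Fin 0 → ℝ) : Fin.append x y = x := by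
  funext i
  rw [Fin.append_right_nil x y rfl]
  rfl

/-- Projecting out the last `m` coordinates of a polyhedron gives a polyhedron. -/
lemma PolyF.appendProj {n : ℕ} : ∀ {m : ℕ} {S : Set (Fin (n + m) → ℝ)}, PolyF S →
    PolyF {x : Fin n → ℝ | ∃ y : Fin m → ℝ, Fin.append x y ∈ S} := by
  intro m
  induction m with
  | zero =>
    intro S hS
    have : {x : Fin n → ℝ | ∃ y : Fin 0 → ℝ, Fin.append x y ∈ S} = S := by
      ext x
      constructor
      · rintro ⟨y, hy⟩; rwa [fin_append_zero x y] at hy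
      · intro hx; exact ⟨Fin.elim0, by rwa [fin_append_zero x Fin.elim0]⟩
    rw [this]
    exact hS
  | succ m ih =>
    intro S hS
    have key : {x : Fin n → ℝ | ∃ y : Fin (m + 1) → ℝ, Fin.append x y ∈ S}
        = {x : Fin n → ℝ | ∃ y : Fin m → ℝ, Fin.append x y ∈
            {w : Fin (n + m) → ℝ | ∃ t : ℝ, Fin.snoc w t ∈ S}} := by
      ext x
      constructor
      · rintro ⟨y, hy⟩
        refine ⟨Fin.init y, y (Fin.last m), ?_⟩
        rwa [← Fin.append_snoc, Fin.snoc_init_self]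
      · rintro ⟨y, t, hyt⟩
        exact ⟨Fin.snoc y t, by rwa [Fin.append_snoc]⟩
    rw [key]
    exact ih (PolyF.snocProj hS)

lemma polyF_of_isConvexPolyhedron {n : ℕ} {P : Set (Fin n → ℝ)}
    (h : IsConvexPolyhedron P) : PolyF P := by
  obtain ⟨m, ν, c, -, rfl⟩ := h
  refine ⟨Finset.univ.image (fun i => (ν i, c i)), ?_⟩
  ext x
  simp only [Set.mem_iInter, Set.mem_setOf_eq]
  constructor
  · intro hx p hp
    obtain ⟨i, -, rfl⟩ := Finset.mem_image.mp hp
    exact hx i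
  · intro hx i
    exact hx _ (Finset.mem_image.mpr ⟨i, Finset.mem_univ i, rfl⟩)

/-- Two nonempty disjoint convex polyhedra in `ℝⁿ` are at positive distance, where the
distance (here w.r.t. the sup-metric on `Fin n → ℝ`) is
`d(P',P'') = inf {‖a - b‖∞ : a ∈ P', b ∈ P''}`. -/
theorem disjoint_polyhedra_pos_dist {n : ℕ} (P' P'' : Set (Fin n → ℝ))
    (h1 : IsConvexPolyhedron P') (h2 : IsConvexPolyhedron P'')
    (hne1 : P'.Nonempty) (hne2 : P''.Nonempty) (hdisj : P' ∩ P'' = ∅) :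
    0 < sInf {d : ℝ | ∃ a ∈ P', ∃ b ∈ P'', d = dist a b} := by
  classical
  obtain ⟨A1, hA1⟩ := polyF_of_isConvexPolyhedron h1
  obtain ⟨A2, hA2⟩ := polyF_of_isConvexPolyhedron h2
  set AQ : Finset ((Fin (n + n) → ℝ) × ℝ) :=
    A1.image (fun p => (Fin.append p.1 p.1, p.2)) ∪
      A2.image (fun p => (Fin.append (0 : Fin n → ℝ) p.1, p.2)) with hAQ
  set Q : Set (Fin (n + n) → ℝ) := {z | ∀ p ∈ AQ, p.2 ≤ ∑ j, p.1 j * z j} with hQ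
  have sum_append : ∀ (u w v y : Fin n → ℝ),
      (∑ k : Fin (n + n), (Fin.append u w) k * (Fin.append v y) k)
        = (∑ j, u j * v j) + ∑ j, w j * y j := by
    intro u w v y
    rw [Fin.sum_univ_add]
    congr 1
    · exact Finset.sum_congr rfl fun j _ => by rw [Fin.append_left, Fin.append_left]
    · exact Finset.sum_congr rfl fun j _ => by rw [Fin.append_right, Fin.append_right]
  have hQmem : ∀ v y : Fin n → ℝ, Fin.append v y ∈ Q ↔ (v + y ∈ P' ∧ y ∈ P'') := by
    intro v y
    constructor
    · intro hz
      constructor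
      · rw [hA1]
        intro p hp
        have := hz _ (Finset.mem_union_left _ (Finset.mem_image.mpr ⟨p, hp, rfl⟩))
        rw [sum_append] at this
        rw [← Finset.sum_add_distrib] at this
        simpa [mul_add] using this
      · rw [hA2]
        intro p hp
        have := hz _ (Finset.mem_union_right _ (Finset.mem_image.mpr ⟨p, hp, rfl⟩))
        rw [sum_append] at this
        simpa using this
    · rintro ⟨hv, hy⟩
      rw [hA1] at hv
      rw [hA2] at hy
      intro p hp
      rcases Finset.mem_union.mp hp with hp1 | hp2
      · obtain ⟨q, hq, rfl⟩ := Finset.mem_image.mp hp1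
        have := hv q hq
        dsimp only
        rw [sum_append, ← Finset.sum_add_distrib]
        simpa [mul_add] using this
      · obtain ⟨q, hq, rfl⟩ := Finset.mem_image.mp hp2
        have := hy q hq
        dsimp only
        rw [sum_append]
        simpa using this
  set D : Set (Fin n → ℝ) := {v | ∃ y : Fin n → ℝ, Fin.append v y ∈ Q} with hD
  have hDpoly : PolyF D := PolyF.appendProj ⟨AQ, rfl⟩
  have hD0 : (0 : Fin n → ℝ) ∉ D := by
    rintro ⟨y, hy⟩
    rw [hQmem] at hy
    rw [zero_add] at hy
    exact Set.eq_empty_iff_forall_notMem.mp hdisj y ⟨hy.1, hy.2⟩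
  obtain ⟨ε, hε, hball⟩ := Metric.isOpen_iff.mp hDpoly.isClosed.isOpen_compl 0 hD0
  obtain ⟨a0, ha0⟩ := hne1
  obtain ⟨b0, hb0⟩ := hne2
  refine lt_of_lt_of_le hε (le_csInf ⟨dist a0 b0, a0, ha0, b0, hb0, rfl⟩ ?_)
  rintro d ⟨a, ha, b, hb, rfl⟩
  by_contra hlt
  push_neg at hlt
  have hv : a - b ∈ D := ⟨b, (hQmem _ _).mpr ⟨by rwa [sub_add_cancel], hb⟩⟩
  have hmem : a - b ∈ Metric.ball (0 : Fin n → ℝ) ε := by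
    rw [Metric.mem_ball, dist_zero_right, ← dist_eq_norm]
    exact hlt
  exact hball hmem hv
end
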